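/- arXiv:1712.02296 — 3 statements merged into one kernel-verified Lean document; each statement's English description precedes it below -/
import Mathlib

section
/- Let β > 0, let Σ ⊆ ℝ³ be a measurable set contained in the closed ball of center x₀ and radius R > 0, and let E, B : ℝ³ → ℝ³ be measurable vector fields with U(E(x),B(x)) > 0 for all x ∈ Σ, such that u_BI(E(·),B(·)) and U^{-1/2}(E × B) are integrable on Σ. Then for every unit vector k ∈ ℝ³, ∫_Σ u_BI(E(x),B(x)) dx ≥ (1/R) · | ∫_Σ U(E(x),B(x))^{-1/2} ⟨(x − x₀) × (E(x) × B(x)), k⟩ dx |. (No field equations are assumed; this is a quasi-local inequality between the Born–Infeld energy and angular momentum of the region Σ.) -/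
/-!
Pointwise, `‖E × B‖ ≤ (‖E‖² + ‖B‖²)/2` and, dropping the `(E⋅B)²` term of `U`,
`β²√U ≤ √(β²(β² + ‖B‖² − ‖E‖²)) ≤ β² + (‖B‖² − ‖E‖²)/2` by AM–GM. Adding the two gives
`‖E × B‖ ≤ β² + ‖B‖² − β²√U`, i.e. the momentum density `U^{-1/2}‖E × B‖` is at most `u_BI`.
On the ball `‖(x − x₀) × (E × B)‖ ≤ R ‖E × B‖`, so the angular momentum density is at most
`R u_BI`, and integrating gives the inequality.
-/

open MeasureTheory Real Filter
open scoped RealInnerProductSpace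

noncomputable section

/-- Three-dimensional Euclidean space. -/
abbrev E3 := EuclideanSpace ℝ (Fin 3)

/-- Cross product on `ℝ³`. -/
def cross3 (a b : E3) : E3 :=
  WithLp.toLp 2 ![a 1 * b 2 - a 2 * b 1, a 2 * b 0 - a 0 * b 2, a 0 * b 1 - a 1 * b 0]

/-- The Born–Infeld function `U(E,B) = 1 + ‖B‖²/β² − ‖E‖²/β² − (E⋅B)²/β⁴`. -/
def Ubi (β : ℝ) (E B : E3) : ℝ :=
  1 + ‖B‖ ^ 2 / β ^ 2 - ‖E‖ ^ 2 / β ^ 2 - ⟪E, B⟫ ^ 2 / β ^ 4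

/-- The Born–Infeld energy density `u_BI(E,B) = (β²/√U)(1 + ‖B‖²/β² − √U)`. -/
def uBI (β : ℝ) (E B : E3) : ℝ :=
  β ^ 2 / Real.sqrt (Ubi β E B) * (1 + ‖B‖ ^ 2 / β ^ 2 - Real.sqrt (Ubi β E B))

lemma norm_cross3_sq (a b : E3) : ‖cross3 a b‖ ^ 2 = ‖a‖ ^ 2 * ‖b‖ ^ 2 - ⟪a, b⟫ ^ 2 := by
  simp only [cross3, EuclideanSpace.norm_sq_eq, norm_eq_abs, sq_abs, Fin.sum_univ_three,
    Matrix.cons_val_zero, Matrix.cons_val_one, Matrix.cons_val, PiLp.inner_apply,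
    RCLike.inner_apply, ringHom_apply]
  ring

lemma norm_cross3_le (a b : E3) : ‖cross3 a b‖ ≤ ‖a‖ * ‖b‖ := by
  have h := norm_cross3_sq a b
  nlinarith [norm_nonneg (cross3 a b), mul_nonneg (norm_nonneg a) (norm_nonneg b),
    sq_nonneg ⟪a, b⟫]

lemma abs_inner_cross3_le (a b k : E3) : |⟪cross3 a b, k⟫| ≤ ‖a‖ * ‖b‖ * ‖k‖ :=
  (abs_real_inner_le_norm _ _).trans
    (mul_le_mul_of_nonneg_right (norm_cross3_le a b) (norm_nonneg k))

lemma sq_mul_sqrt_Ubi_le {β : ℝ} (hβ : β ≠ 0) {a b : E3} (hU : 0 ≤ Ubi β a b) :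
    β ^ 2 * √(Ubi β a b) ≤ β ^ 2 + (‖b‖ ^ 2 - ‖a‖ ^ 2) / 2 := by
  set c := β ^ 2
  set d := c + ‖b‖ ^ 2 - ‖a‖ ^ 2 with hd_def
  have hc : 0 < c := by positivity
  have hsq : (c * √(Ubi β a b)) ^ 2 = c * d - ⟪a, b⟫ ^ 2 := by
    rw [mul_pow, sq_sqrt hU, Ubi]
    field_simp
    ring
  have hd : 0 ≤ d := by nlinarith [sq_nonneg (c * √(Ubi β a b)), sq_nonneg ⟪a, b⟫]
  have hamgm : c * d ≤ ((c + d) / 2) ^ 2 := by nlinarith [sq_nonneg (c - d)]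
  calc c * √(Ubi β a b) ≤ (c + d) / 2 :=
        le_of_sq_le_sq (by nlinarith [sq_nonneg ⟪a, b⟫]) (by positivity)
    _ = c + (‖b‖ ^ 2 - ‖a‖ ^ 2) / 2 := by rw [hd_def]; ring

lemma inv_sqrt_Ubi_mul_norm_cross3_le_uBI {β : ℝ} (hβ : β ≠ 0) {a b : E3}
    (hU : 0 < Ubi β a b) : (√(Ubi β a b))⁻¹ * ‖cross3 a b‖ ≤ uBI β a b := by
  have huBI : uBI β a b = (√(Ubi β a b))⁻¹ * (β ^ 2 + ‖b‖ ^ 2 - β ^ 2 * √(Ubi β a b)) := by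
    have : √(Ubi β a b) ≠ 0 := (sqrt_pos.mpr hU).ne'
    rw [uBI]
    field_simp
  have hcross : ‖cross3 a b‖ ≤ (‖a‖ ^ 2 + ‖b‖ ^ 2) / 2 := by
    nlinarith [norm_cross3_le a b, sq_nonneg (‖a‖ - ‖b‖)]
  rw [huBI]
  gcongr
  linarith [sq_mul_sqrt_Ubi_le hβ hU.le]

theorem bornInfeld_quasilocal_energy_angularMomentum_inequality_general
    (β : ℝ) (hβ : 0 < β)
    (S : Set E3) (hSm : MeasurableSet S)
    (x₀ : E3) (R : ℝ) (hR : 0 < R) (hball : S ⊆ Metric.closedBall x₀ R)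
    (E B : E3 → E3)
    (hU : ∀ x ∈ S, 0 < Ubi β (E x) (B x))
    (hu_int : IntegrableOn (fun x => uBI β (E x) (B x)) S)
    (k : E3) (hk : ‖k‖ = 1) :
    ∫ x in S, uBI β (E x) (B x) ≥
      (1 / R) * |∫ x in S, (Real.sqrt (Ubi β (E x) (B x)))⁻¹ *
        ⟪cross3 (x - x₀) (cross3 (E x) (B x)), k⟫| := by
  have hbound : ∀ x ∈ S, ‖(√(Ubi β (E x) (B x)))⁻¹ *
      ⟪cross3 (x - x₀) (cross3 (E x) (B x)), k⟫‖ ≤ R * uBI β (E x) (B x) := by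
    intro x hx
    have hxR : ‖x - x₀‖ ≤ R := by simpa [dist_eq_norm] using hball hx
    have hmom := abs_inner_cross3_le (x - x₀) (cross3 (E x) (B x)) k
    rw [hk, mul_one] at hmom
    calc ‖(√(Ubi β (E x) (B x)))⁻¹ * ⟪cross3 (x - x₀) (cross3 (E x) (B x)), k⟫‖
        ≤ (√(Ubi β (E x) (B x)))⁻¹ * (R * ‖cross3 (E x) (B x)‖) := by
          rw [norm_mul, norm_inv, norm_of_nonneg (sqrt_nonneg _), norm_eq_abs]
          gcongr
          exact hmom.trans (by gcongr)
      _ = R * ((√(Ubi β (E x) (B x)))⁻¹ * ‖cross3 (E x) (B x)‖) := by ring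
      _ ≤ R * uBI β (E x) (B x) := by
          gcongr
          exact inv_sqrt_Ubi_mul_norm_cross3_le_uBI hβ.ne' (hU x hx)
  -- No integrability of the angular momentum density is needed: otherwise its integral is `0`.
  have hJ := norm_integral_le_of_norm_le (hu_int.const_mul R)
    (ae_restrict_of_forall_mem hSm hbound)
  rw [integral_const_mul, norm_eq_abs] at hJ
  rwa [ge_iff_le, one_div_mul_eq_div, div_le_iff₀' hR]

/-- **Quasi-local energy–angular momentum inequality for Born–Infeld electrodynamics.**
For any measurable region `S` contained in the closed ball of center `x₀` and radius
`R > 0`, and measurable fields `E, B` with `U > 0` on `S` whose Born–Infeld energy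
density and momentum density `U^{-1/2} (E × B)` are integrable on `S`, the
Born–Infeld energy of `S` dominates `(1/R)` times the absolute value of its
Born–Infeld angular momentum about `x₀` along any unit axis `k`. -/
theorem bornInfeld_quasilocal_energy_angularMomentum_inequality
    (β : ℝ) (hβ : 0 < β)
    (S : Set E3) (hSm : MeasurableSet S)
    (x₀ : E3) (R : ℝ) (hR : 0 < R) (hball : S ⊆ Metric.closedBall x₀ R)
    (E B : E3 → E3) (hEm : Measurable E) (hBm : Measurable B)
    (hU : ∀ x ∈ S, 0 < Ubi β (E x) (B x))
    (hu_int : IntegrableOn (fun x => uBI β (E x) (B x)) S)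
    (hJ_int : IntegrableOn
      (fun x => (Real.sqrt (Ubi β (E x) (B x)))⁻¹ • cross3 (E x) (B x)) S)
    (k : E3) (hk : ‖k‖ = 1) :
    ∫ x in S, uBI β (E x) (B x) ≥
      (1 / R) * |∫ x in S, (Real.sqrt (Ubi β (E x) (B x)))⁻¹ *
        ⟪cross3 (x - x₀) (cross3 (E x) (B x)), k⟫| :=
  bornInfeld_quasilocal_energy_angularMomentum_inequality_general β hβ S hSm x₀ R hR hball E B hU
    hu_int k hk

end
end

section
/- Let α, γ ≥ 0, c ∈ [−1,1] and t ∈ [0,1], and set U := 1 + γ² − α² − α²γ²c². If U ≥ 0 then 1 + γ² − √U ≥ t·α·γ. (This is the pointwise statement that the Born–Infeld energy density dominates the angular-momentum density: (β²/√U)(1 + γ² − √U) ≥ (t/√U)·β²αγ whenever U > 0.) -/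
/-!
The identity `(1 + γ² - αγ)² - U = (1 + γ²)(α - γ)² + (αγc)²` gives `√U ≤ 1 + γ² - αγ`, once
`1 + γ² - αγ ≥ 0`; the latter holds because `U ≥ 0` forces `α² ≤ 1 + γ²`. Hence
`1 + γ² - √U ≥ αγ ≥ tαγ`.
-/

noncomputable section

def bornInfeldFunction (α γ c : ℝ) : ℝ := 1 + γ ^ 2 - α ^ 2 - α ^ 2 * γ ^ 2 * c ^ 2

theorem sq_one_add_sq_sub_mul_sub_bornInfeldFunction (α γ c : ℝ) :
    (1 + γ ^ 2 - α * γ) ^ 2 - bornInfeldFunction α γ c =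
      (1 + γ ^ 2) * (α - γ) ^ 2 + (α * γ * c) ^ 2 := by
  unfold bornInfeldFunction
  ring

theorem bornInfeldFunction_le_sq (α γ c : ℝ) :
    bornInfeldFunction α γ c ≤ (1 + γ ^ 2 - α * γ) ^ 2 := by
  rw [← sub_nonneg, sq_one_add_sq_sub_mul_sub_bornInfeldFunction]
  positivity

theorem sq_le_one_add_sq_of_bornInfeldFunction_nonneg {α γ c : ℝ}
    (hU : 0 ≤ bornInfeldFunction α γ c) : α ^ 2 ≤ 1 + γ ^ 2 := by
  unfold bornInfeldFunction at hU
  nlinarith [sq_nonneg (α * γ * c)]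

theorem mul_le_one_add_sq_of_bornInfeldFunction_nonneg {α γ c : ℝ}
    (hU : 0 ≤ bornInfeldFunction α γ c) : α * γ ≤ 1 + γ ^ 2 := by
  have hα := sq_le_one_add_sq_of_bornInfeldFunction_nonneg hU
  nlinarith [sq_nonneg (α - γ), sq_nonneg γ]

theorem sqrt_bornInfeldFunction_le {α γ c : ℝ} (hU : 0 ≤ bornInfeldFunction α γ c) :
    √(bornInfeldFunction α γ c) ≤ 1 + γ ^ 2 - α * γ :=
  Real.sqrt_le_iff.mpr
    ⟨sub_nonneg.mpr (mul_le_one_add_sq_of_bornInfeldFunction_nonneg hU),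
      bornInfeldFunction_le_sq α γ c⟩

end

theorem bornInfeld_pointwise_energy_dominates_angularMomentum_general
    (α γ c t : ℝ) (hα : 0 ≤ α) (hγ : 0 ≤ γ)
    (ht : t ∈ Set.Icc (0 : ℝ) 1)
    (hU : 0 ≤ 1 + γ ^ 2 - α ^ 2 - α ^ 2 * γ ^ 2 * c ^ 2) :
    1 + γ ^ 2 - Real.sqrt (1 + γ ^ 2 - α ^ 2 - α ^ 2 * γ ^ 2 * c ^ 2) ≥
      t * α * γ := by
  have hsqrt : √(bornInfeldFunction α γ c) ≤ 1 + γ ^ 2 - α * γ := sqrt_bornInfeldFunction_le hU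
  calc t * α * γ = t * (α * γ) := mul_assoc t α γ
    _ ≤ α * γ := mul_le_of_le_one_left (mul_nonneg hα hγ) ht.2
    _ ≤ 1 + γ ^ 2 - √(bornInfeldFunction α γ c) := by linarith

/-- **Pointwise energy–angular momentum bound in Born–Infeld electrodynamics.**
For normalized field strengths `α, γ ≥ 0`, `c ∈ [−1,1]`, normalized distance
`t ∈ [0,1]` and `U = 1 + γ² − α² − α²γ²c² ≥ 0` one has `1 + γ² − √U ≥ tαγ`. -/
theorem bornInfeld_pointwise_energy_dominates_angularMomentum
    (α γ c t : ℝ) (hα : 0 ≤ α) (hγ : 0 ≤ γ)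
    (hc : c ∈ Set.Icc (-1 : ℝ) 1) (ht : t ∈ Set.Icc (0 : ℝ) 1)
    (hU : 0 ≤ 1 + γ ^ 2 - α ^ 2 - α ^ 2 * γ ^ 2 * c ^ 2) :
    1 + γ ^ 2 - Real.sqrt (1 + γ ^ 2 - α ^ 2 - α ^ 2 * γ ^ 2 * c ^ 2) ≥
      t * α * γ :=
  bornInfeld_pointwise_energy_dominates_angularMomentum_general α γ c t hα hγ ht hU
end

section
/- The improper integral I := ∫_{√2}^{∞} y² · ( 2/(1 + y⁴) − ln(1 + y^{-4}) ) dy converges and satisfies I < √2/2. (This numerical bound is exactly the statement that the logarithmic-electrodynamics binding energy 𝓔_log = √(Q³β/(8π√2)) · I of a minimal-radius charged sphere is strictly smaller than the Maxwell binding energy 𝓔_M = Q²/(8πr₀) of the same configuration.) -/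
open MeasureTheory Real Set

/-!
Write `x = y⁻⁴`, so the integrand is `y² (2x/(1+x) - log (1+x))`. For `0 < x ≤ 1` we have
`x/(1+x) ≤ log (1+x) ≤ x ≤ 2x/(1+x)`, hence `0 ≤ integrand < y² x = y⁻²`. The integrand
is therefore integrable on `(c, ∞)` for `c ≥ 1`, and its integral is strictly below
`∫_c^∞ y⁻² dy = 1/c`; at `c = √2` this is `√2/2`.
-/

theorem setIntegral_lt_setIntegral_of_forall_lt {X : Type*} [MeasurableSpace X] {μ : Measure X}
    {s : Set X} {f g : X → ℝ} (hs : MeasurableSet s) (hμs : μ s ≠ 0)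
    (hf : IntegrableOn f s μ) (hg : IntegrableOn g s μ) (hlt : ∀ x ∈ s, f x < g x) :
    ∫ x in s, f x ∂μ < ∫ x in s, g x ∂μ := by
  rw [← sub_pos, ← integral_sub hg hf]
  have hpos : 0 ≤ᵐ[μ.restrict s] fun x => g x - f x := by
    filter_upwards [ae_restrict_mem hs] with x hx using (sub_pos.2 (hlt x hx)).le
  have hsupp : s ⊆ Function.support fun x => g x - f x := fun x hx =>
    (sub_pos.2 (hlt x hx)).ne'
  rw [setIntegral_pos_iff_support_of_nonneg_ae hpos (hg.sub hf),
    inter_eq_self_of_subset_right hsupp]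
  exact pos_iff_ne_zero.2 hμs

theorem integrableOn_Ioi_inv_sq {c : ℝ} (hc : 0 < c) :
    IntegrableOn (fun t : ℝ => (t ^ 2)⁻¹) (Ioi c) := by
  refine (integrableOn_Ioi_rpow_of_lt (by norm_num : (-2 : ℝ) < -1) hc).congr_fun
    (fun t ht => ?_) measurableSet_Ioi
  simp only [rpow_neg (hc.trans ht).le, rpow_two]

theorem integral_Ioi_inv_sq {c : ℝ} (hc : 0 < c) : ∫ t in Ioi c, (t ^ 2)⁻¹ = c⁻¹ := by
  rw [setIntegral_congr_fun measurableSet_Ioi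
    fun t (ht : c < t) => by rw [← rpow_two, ← rpow_neg (hc.trans ht).le]]
  rw [integral_Ioi_rpow_of_lt (by norm_num) hc]
  norm_num [rpow_neg_one]

theorem log_one_add_le_two_mul_div_one_add {x : ℝ} (h0 : 0 ≤ x) (h1 : x ≤ 1) :
    log (1 + x) ≤ 2 * x / (1 + x) := by
  have hx : x ≤ 2 * x / (1 + x) := by
    rw [le_div_iff₀ (by linarith)]
    nlinarith
  linarith [log_le_sub_one_of_pos (by linarith : 0 < 1 + x)]

theorem two_mul_div_one_add_sub_log_one_add_lt {x : ℝ} (hx : 0 < x) :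
    2 * x / (1 + x) - log (1 + x) < x := by
  have hlog := one_sub_inv_le_log_of_pos (by linarith : 0 < 1 + x)
  have hx' : 2 * x / (1 + x) - (1 - (1 + x)⁻¹) < x := by
    field_simp
    nlinarith
  linarith

noncomputable def logBindingIntegrand (y : ℝ) : ℝ :=
  y ^ 2 * (2 / (1 + y ^ 4) - log (1 + (y ^ 4)⁻¹))

theorem logBindingIntegrand_eq {y : ℝ} (hy : y ≠ 0) :
    logBindingIntegrand y =
      y ^ 2 * (2 * (y ^ 4)⁻¹ / (1 + (y ^ 4)⁻¹) - log (1 + (y ^ 4)⁻¹)) := by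
  unfold logBindingIntegrand
  congr 2
  field_simp
  ring

theorem logBindingIntegrand_nonneg {y : ℝ} (hy : 1 ≤ y) : 0 ≤ logBindingIntegrand y := by
  rw [logBindingIntegrand_eq (by positivity)]
  refine mul_nonneg (by positivity) (sub_nonneg.2 ?_)
  exact log_one_add_le_two_mul_div_one_add (by positivity)
    (inv_le_one_of_one_le₀ (one_le_pow₀ hy))

theorem logBindingIntegrand_lt_inv_sq {y : ℝ} (hy : y ≠ 0) :
    logBindingIntegrand y < (y ^ 2)⁻¹ := by
  rw [logBindingIntegrand_eq hy]
  calc _ < y ^ 2 * (y ^ 4)⁻¹ := by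
        gcongr
        exact two_mul_div_one_add_sub_log_one_add_lt (by positivity)
    _ = (y ^ 2)⁻¹ := by field_simp

theorem measurable_logBindingIntegrand : Measurable logBindingIntegrand := by
  unfold logBindingIntegrand
  fun_prop

theorem integrableOn_logBindingIntegrand {c : ℝ} (hc : 1 ≤ c) :
    IntegrableOn logBindingIntegrand (Ioi c) := by
  refine (integrableOn_Ioi_inv_sq (by linarith)).mono'
    measurable_logBindingIntegrand.aestronglyMeasurable ?_
  filter_upwards [ae_restrict_mem measurableSet_Ioi] with y (hy : c < y)
  rw [norm_of_nonneg (logBindingIntegrand_nonneg (by linarith))]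
  exact (logBindingIntegrand_lt_inv_sq (by linarith)).le

theorem integral_logBindingIntegrand_lt {c : ℝ} (hc : 1 ≤ c) :
    ∫ y in Ioi c, logBindingIntegrand y < c⁻¹ := by
  rw [← integral_Ioi_inv_sq (by linarith : 0 < c)]
  exact setIntegral_lt_setIntegral_of_forall_lt measurableSet_Ioi (by simp)
    (integrableOn_logBindingIntegrand hc) (integrableOn_Ioi_inv_sq (by linarith))
    fun y (hy : c < y) => logBindingIntegrand_lt_inv_sq (by linarith)

/-- **The dimensionless binding-energy integral of logarithmic electrodynamics.**
The improper integral `I = ∫_{√2}^∞ y²(2/(1+y⁴) − ln(1+y⁻⁴)) dy` converges and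
satisfies `I < √2/2`, i.e. the logarithmic binding energy of a minimal-radius
charged sphere is strictly smaller than the corresponding Maxwell binding energy. -/
theorem log_electrodynamics_binding_energy_integral :
    IntegrableOn
      (fun y : ℝ => y ^ 2 * (2 / (1 + y ^ 4) - Real.log (1 + (y ^ 4)⁻¹)))
      (Set.Ioi (Real.sqrt 2)) ∧
    ∫ y in Set.Ioi (Real.sqrt 2),
        y ^ 2 * (2 / (1 + y ^ 4) - Real.log (1 + (y ^ 4)⁻¹)) <
      Real.sqrt 2 / 2 := by
  have hc : 1 ≤ √2 := one_le_sqrt.2 one_le_two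
  refine ⟨integrableOn_logBindingIntegrand hc, ?_⟩
  calc ∫ y in Ioi √2, logBindingIntegrand y < (√2)⁻¹ := integral_logBindingIntegrand_lt hc
    _ = √2 / 2 := by field_simp; simp
end
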